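/- arXiv:2311.17384 — 2 statements merged into one kernel-verified Lean document; each statement's English description precedes it below -/
import Mathlib

section
/- The support of a stabiliser state is an affine subspace of (Z_2)^n. Precisely, if ψ ∈ C^{2^n} is a nonzero simultaneous (-1)^{λ_j}-eigenvector of commuting Paulis W(p_j,q_j), j=1,...,n, spanning a Lagrangian subspace, then {z ∈ (Z_2)^n : ⟨z|ψ⟩ ≠ 0} equals c + V for some c ∈ (Z_2)^n and some linear subspace V of (Z_2)^n. -/
open scoped Matrix ComplexConjugate

/-- Bit vectors of length `n` over `ℤ/2`. -/
abbrev V2 (n : ℕ) := Fin n → ZMod 2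

/-- Dot product over `ℤ/2`. -/
def dotZ2 {n : ℕ} (a b : V2 n) : ZMod 2 := ∑ i, a i * b i

/-- The symplectic product on `(ℤ/2)^{2n}`: `[(p₁,q₁),(p₂,q₂)] = p₁·q₂ - p₂·q₁`. -/
def symp {n : ℕ} (x y : V2 n × V2 n) : ZMod 2 := dotZ2 x.1 y.2 - dotZ2 y.1 x.2

/-- The computational basis vector `|z⟩` in `ℂ^{2^n}`. -/
noncomputable def basisVec {n : ℕ} (z : V2 n) : V2 n → ℂ := fun y => if y = z then 1 else 0

/-- The Pauli operator `W(p,q) = (-i)^{p·q mod 4} Z^p X^q`, where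
`Z^p X^q |z⟩ = (-1)^{(z+q)·p} |z+q⟩` (bits of `p·q` lifted to integers). -/
noncomputable def W {n : ℕ} (p q : V2 n) : Matrix (V2 n) (V2 n) ℂ :=
  Matrix.of fun y z =>
    if y = z + q then
      (-Complex.I) ^ ((∑ i, (p i).val * (q i).val) % 4) * (-1 : ℂ) ^ (dotZ2 (z + q) p).val
    else 0
/-- A subspace of `(ℤ/2)^{2n}` is isotropic if the symplectic form vanishes on it. -/
def IsIsotropic {n : ℕ} (L : Submodule (ZMod 2) (V2 n × V2 n)) : Prop :=
  ∀ x ∈ L, ∀ y ∈ L, symp x y = 0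

/-- A Lagrangian subspace: a maximal isotropic subspace of `(ℤ/2)^{2n}`. -/
def IsLagrangian {n : ℕ} (L : Submodule (ZMod 2) (V2 n × V2 n)) : Prop :=
  IsIsotropic L ∧ ∀ L', IsIsotropic L' → L ≤ L' → L' = L

/-!
For every `(p, q)` in the Lagrangian `L` spanned by the stabilisers, `ψ` satisfies
`ψ (y + q) = c · (-1)^{y·p} · ψ y` with `c ≠ 0`, so its support `S` is invariant under the
projection `Q` of `L` to the `q`-coordinates. Conversely, if `a` is orthogonal to `Q`, then
`(a, 0)` is symplectically orthogonal to `L`, hence lies in `L` by maximality, and the relation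
for `(a, 0)` makes `y ↦ (-1)^{y·a}` constant on `S`. So differences of points of `S` lie in
`Qᗮᗮ = Q`, and `S = z₀ + Q` for any `z₀ ∈ S`.
-/

open Submodule Matrix

noncomputable def signZ2 (a : ZMod 2) : ℂ := (-1) ^ a.val

lemma signZ2_add (a b : ZMod 2) : signZ2 (a + b) = signZ2 a * signZ2 b := by
  rw [signZ2, signZ2, signZ2, ZMod.val_add, ← neg_one_pow_eq_pow_mod_two, pow_add]

lemma signZ2_ne_zero (a : ZMod 2) : signZ2 a ≠ 0 := by
  simp [signZ2]

lemma signZ2_mul_self (a : ZMod 2) : signZ2 a * signZ2 a = 1 := by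
  rw [← signZ2_add, CharTwo.add_self_eq_zero]
  simp [signZ2]

lemma signZ2_injective : Function.Injective signZ2 := by
  intro a b h
  fin_cases a <;> fin_cases b <;> first | rfl | (simp [signZ2, ZMod.val] at h; norm_num at h)

lemma Submodule.exists_dotProduct_ne_zero_of_notMem {K ι : Type*} [Field K] [Fintype ι]
    {Q : Submodule K (ι → K)} {d : ι → K} (hd : d ∉ Q) :
    ∃ a : ι → K, (∀ v ∈ Q, a ⬝ᵥ v = 0) ∧ a ⬝ᵥ d ≠ 0 := by
  classical
  obtain ⟨φ, hφ, hφd⟩ : ∃ φ ∈ Q.dualAnnihilator, φ d ≠ 0 := by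
    by_contra! h
    exact hd ((Subspace.forall_mem_dualAnnihilator_apply_eq_zero_iff Q d).mp h)
  have hdot (v : ι → K) : (dotProductEquiv K ι).symm φ ⬝ᵥ v = φ v := by
    rw [← dotProductEquiv_apply_apply, LinearEquiv.apply_symm_apply]
  exact ⟨_, fun v hv => (hdot v).trans ((mem_dualAnnihilator φ).mp hφ v hv), (hdot d).trans_ne hφd⟩

section Pauli

variable {n : ℕ}

lemma dotZ2_eq_dotProduct (a b : V2 n) : dotZ2 a b = a ⬝ᵥ b := rfl

noncomputable def pauliPhase (p q : V2 n) : ℂ :=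
  (-Complex.I) ^ ((∑ i, (p i).val * (q i).val) % 4)

lemma pauliPhase_ne_zero (p q : V2 n) : pauliPhase p q ≠ 0 := by
  simp [pauliPhase]

lemma W_mulVec_apply (p q : V2 n) (ψ : V2 n → ℂ) (y : V2 n) :
    (W p q *ᵥ ψ) y = pauliPhase p q * signZ2 (y ⬝ᵥ p) * ψ (y + q) := by
  have hshift (z : V2 n) : y = z + q ↔ z = y + q := by
    rw [← sub_eq_iff_eq_add, eq_comm, ZModModule.sub_eq_add]
  simp only [mulVec, dotProduct, W, of_apply, hshift, ite_mul, zero_mul, Finset.sum_ite_eq',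
    Finset.mem_univ, if_true, add_assoc, ZModModule.add_self, add_zero]
  rfl

/-- Up to the constant `c`, this says that `ψ` is an eigenvector of `W x.1 x.2` with a nonzero
eigenvalue; unlike that property, it is visibly closed under addition of `x`. -/
def IsTwistedInvariant (ψ : V2 n → ℂ) (x : V2 n × V2 n) : Prop :=
  ∃ c : ℂ, c ≠ 0 ∧ ∀ y, ψ (y + x.2) = c * signZ2 (y ⬝ᵥ x.1) * ψ y

lemma isTwistedInvariant_of_mulVec_eq_smul {p q : V2 n} {ψ : V2 n → ℂ} {μ : ℂ}
    (h : W p q *ᵥ ψ = μ • ψ) (hμ : μ ≠ 0) : IsTwistedInvariant ψ (p, q) := by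
  refine ⟨μ * (pauliPhase p q)⁻¹, mul_ne_zero hμ (inv_ne_zero (pauliPhase_ne_zero p q)),
    fun y => ?_⟩
  have hy : pauliPhase p q * signZ2 (y ⬝ᵥ p) * ψ (y + q) = μ * ψ y := by
    rw [← W_mulVec_apply, h, Pi.smul_apply, smul_eq_mul]
  have hphase := mul_inv_cancel₀ (pauliPhase_ne_zero p q)
  linear_combination (pauliPhase p q)⁻¹ * signZ2 (y ⬝ᵥ p) * hy - ψ (y + q) * hphase
    - ψ (y + q) * pauliPhase p q * (pauliPhase p q)⁻¹ * signZ2_mul_self (y ⬝ᵥ p)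

def twistedInvariants (ψ : V2 n → ℂ) : Submodule (ZMod 2) (V2 n × V2 n) where
  carrier := {x | IsTwistedInvariant ψ x}
  zero_mem' := ⟨1, one_ne_zero, fun y => by simp [signZ2]⟩
  add_mem' := by
    rintro x x' ⟨c, hc, hx⟩ ⟨c', hc', hx'⟩
    refine ⟨c * c' * signZ2 (x.2 ⬝ᵥ x'.1), by simp [hc, hc', signZ2_ne_zero], fun y => ?_⟩
    simp only [Prod.snd_add, Prod.fst_add, ← add_assoc, hx', hx, add_dotProduct, dotProduct_add,
      signZ2_add]
    ring
  smul_mem' a x hx := by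
    obtain rfl | rfl : a = 0 ∨ a = 1 := by decide +revert
    · exact ⟨1, one_ne_zero, fun y => by simp [signZ2]⟩
    · rwa [one_smul]

lemma IsTwistedInvariant.apply_add_ne_zero_iff {ψ : V2 n → ℂ} {x : V2 n × V2 n}
    (h : IsTwistedInvariant ψ x) (y : V2 n) : ψ (y + x.2) ≠ 0 ↔ ψ y ≠ 0 := by
  obtain ⟨c, hc, hx⟩ := h
  simp [hx, hc, signZ2_ne_zero]

lemma IsTwistedInvariant.dotProduct_eq_of_apply_ne_zero {ψ : V2 n → ℂ} {a y z : V2 n}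
    (h : IsTwistedInvariant ψ (a, 0)) (hy : ψ y ≠ 0) (hz : ψ z ≠ 0) : y ⬝ᵥ a = z ⬝ᵥ a := by
  obtain ⟨c, hc, ha⟩ := h
  have hfix {w : V2 n} (hw : ψ w ≠ 0) : c * signZ2 (w ⬝ᵥ a) = 1 := by
    simpa [hw] using (ha w).symm
  exact signZ2_injective (mul_left_cancel₀ hc ((hfix hy).trans (hfix hz).symm))

end Pauli

section Symplectic

variable {n : ℕ}

lemma symp_self (x : V2 n × V2 n) : symp x x = 0 := sub_self _

lemma symp_swap (x y : V2 n × V2 n) : symp y x = -symp x y := (neg_sub _ _).symm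

def sympForm (n : ℕ) : LinearMap.BilinForm (ZMod 2) (V2 n × V2 n) :=
  LinearMap.mk₂ (ZMod 2) symp
    (fun x x' y => by simp only [symp, dotZ2_eq_dotProduct, Prod.fst_add, Prod.snd_add,
      add_dotProduct, dotProduct_add]; ring)
    (fun a x y => by simp only [symp, dotZ2_eq_dotProduct, Prod.smul_fst, Prod.smul_snd,
      smul_dotProduct, dotProduct_smul, smul_eq_mul]; ring)
    (fun x y y' => by simp only [symp, dotZ2_eq_dotProduct, Prod.fst_add, Prod.snd_add,
      add_dotProduct, dotProduct_add]; ring)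
    (fun a x y => by simp only [symp, dotZ2_eq_dotProduct, Prod.smul_fst, Prod.smul_snd,
      smul_dotProduct, dotProduct_smul, smul_eq_mul]; ring)

lemma sympForm_apply (x y : V2 n × V2 n) : sympForm n x y = symp x y := rfl

lemma IsIsotropic.sup_span_singleton {L : Submodule (ZMod 2) (V2 n × V2 n)}
    (hL : IsIsotropic L) {v : V2 n × V2 n} (hv : ∀ x ∈ L, symp v x = 0) :
    IsIsotropic (L ⊔ span (ZMod 2) {v}) := by
  rintro _ hx _ hy
  obtain ⟨x, hxL, _, hs, rfl⟩ := mem_sup.mp hx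
  obtain ⟨y, hyL, _, ht, rfl⟩ := mem_sup.mp hy
  obtain ⟨s, rfl⟩ := mem_span_singleton.mp hs
  obtain ⟨t, rfl⟩ := mem_span_singleton.mp ht
  rw [← sympForm_apply]
  simp only [map_add, map_smul, LinearMap.add_apply, LinearMap.smul_apply, sympForm_apply,
    hL x hxL y hyL, symp_swap v x, hv x hxL, hv y hyL, symp_self, neg_zero, smul_zero, add_zero]

lemma IsLagrangian.mem_of_forall_symp_eq_zero {L : Submodule (ZMod 2) (V2 n × V2 n)}
    (hL : IsLagrangian L) {v : V2 n × V2 n} (hv : ∀ x ∈ L, symp v x = 0) : v ∈ L :=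
  hL.2 _ (hL.1.sup_span_singleton hv) le_sup_left ▸ mem_sup_right (mem_span_singleton_self v)

end Symplectic

/-- The support of a stabiliser state is an affine subspace `c + V` of `(ℤ/2)^n`. -/
theorem stab_support_affine {n : ℕ} (p q : Fin n → V2 n) (lam : Fin n → ZMod 2)
    (hLag : IsLagrangian (Submodule.span (ZMod 2) (Set.range fun j => (p j, q j))))
    (ψ : V2 n → ℂ) (hψ : ψ ≠ 0)
    (heig : ∀ j, (W (p j) (q j)).mulVec ψ = ((-1 : ℂ) ^ (lam j).val) • ψ) :
    ∃ (c : V2 n) (V : Submodule (ZMod 2) (V2 n)),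
      {z : V2 n | ψ z ≠ 0} = {x : V2 n | ∃ v ∈ V, x = c + v} := by
  set L := span (ZMod 2) (Set.range fun j => (p j, q j))
  have hinv : L ≤ twistedInvariants ψ := span_le.mpr <| by
    rintro _ ⟨j, rfl⟩
    exact isTwistedInvariant_of_mulVec_eq_smul (heig j) (by simp)
  obtain ⟨z₀, hz₀⟩ := Function.ne_iff.mp hψ
  refine ⟨z₀, L.map (LinearMap.snd _ _ _), Set.ext fun z => ⟨fun hz => ?_, ?_⟩⟩
  · refine ⟨z - z₀, ?_, (add_sub_cancel _ _).symm⟩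
    by_contra hnot
    obtain ⟨a, haQ, haz⟩ := exists_dotProduct_ne_zero_of_notMem hnot
    have ha : (a, 0) ∈ L := hLag.mem_of_forall_symp_eq_zero fun x hx => by
      rw [symp, dotZ2_eq_dotProduct, dotZ2_eq_dotProduct, dotProduct_zero, sub_zero]
      exact haQ x.2 ⟨x, hx, rfl⟩
    apply haz
    rw [dotProduct_sub, dotProduct_comm a, dotProduct_comm a,
      (hinv ha).dotProduct_eq_of_apply_ne_zero hz hz₀, sub_self]
  · rintro ⟨_, ⟨x, hx, rfl⟩, rfl⟩
    exact ((hinv hx).apply_add_ne_zero_iff z₀).mpr hz₀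
end

section
/- All nonzero amplitudes of a stabiliser state with support size 2^r have the same absolute value 2^{-r/2} (for a unit-norm state). Equivalently, if ψ is a unit vector stabilised by a Lagrangian set of Paulis and its support has 2^r elements, then |⟨z|ψ⟩| = 2^{-r/2} for all z in the support. -/
open scoped Matrix ComplexConjugate

/-! ### Auxiliary lemmas -/

noncomputable def kappa {n : ℕ} (p q : V2 n) : ℂ :=
  (-Complex.I) ^ ((∑ i, (p i).val * (q i).val) % 4)

lemma kappa_ne_zero {n : ℕ} (p q : V2 n) : kappa p q ≠ 0 :=
  pow_ne_zero _ (by simpa using Complex.I_ne_zero)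

lemma abs_kappa {n : ℕ} (p q : V2 n) : ‖kappa p q‖ = 1 := by simp [kappa]

lemma zmod2_add_self : ∀ a : ZMod 2, a + a = 0 := by decide

lemma v2_add_self {n : ℕ} (a : V2 n) : a + a = 0 := funext fun i => zmod2_add_self (a i)

lemma neg_one_pow_mod_two (m : ℕ) : ((-1:ℂ)) ^ (m % 2) = (-1) ^ m := by
  conv_rhs => rw [← Nat.div_add_mod m 2]
  rw [pow_add, pow_mul]; norm_num

lemma neg_one_pow_val_add (a b : ZMod 2) :
    ((-1 : ℂ)) ^ ((a + b).val) = (-1) ^ a.val * (-1) ^ b.val := by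
  rw [ZMod.val_add, neg_one_pow_mod_two, pow_add]

lemma neg_one_pow_val_inj (a b : ZMod 2) (h : ((-1:ℂ)) ^ a.val = (-1) ^ b.val) : a = b := by
  have h0 : ∀ c : ZMod 2, c = 0 ∨ c = 1 := by decide
  rcases h0 a with rfl | rfl <;> rcases h0 b with rfl | rfl <;> revert h <;> norm_num [ZMod.val_one]

lemma dotZ2_add_left {n : ℕ} (a b c : V2 n) : dotZ2 (a + b) c = dotZ2 a c + dotZ2 b c := by
  simp [dotZ2, add_mul, Finset.sum_add_distrib]

lemma dotZ2_add_right {n : ℕ} (a b c : V2 n) : dotZ2 a (b + c) = dotZ2 a b + dotZ2 a c := by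
  simp [dotZ2, mul_add, Finset.sum_add_distrib]

lemma dotZ2_comm {n : ℕ} (a b : V2 n) : dotZ2 a b = dotZ2 b a := by
  simp [dotZ2, mul_comm]

lemma dotZ2_zero_right {n : ℕ} (a : V2 n) : dotZ2 a 0 = 0 := by simp [dotZ2]

lemma dotZ2_smul_left {n : ℕ} (c : ZMod 2) (a b : V2 n) :
    dotZ2 (c • a) b = c * dotZ2 a b := by
  simp [dotZ2, Finset.mul_sum, mul_assoc]

lemma dotZ2_smul_right {n : ℕ} (c : ZMod 2) (a b : V2 n) :
    dotZ2 a (c • b) = c * dotZ2 a b := by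
  rw [dotZ2_comm, dotZ2_smul_left, dotZ2_comm]

lemma W_mulVec {n : ℕ} (p q : V2 n) (φ : V2 n → ℂ) (y : V2 n) :
    (W p q).mulVec φ y = kappa p q * (-1 : ℂ) ^ (dotZ2 y p).val * φ (y + q) := by
  unfold Matrix.mulVec dotProduct
  rw [Finset.sum_eq_single (y + q)]
  · have h : y = (y + q) + q := by rw [add_assoc, v2_add_self, add_zero]
    simp only [W, Matrix.of_apply, if_pos h, ← h, kappa]
    simp
  · intro b _ hb
    have : y ≠ b + q := by
      intro h; apply hb; rw [h, add_assoc, v2_add_self, add_zero]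
    simp [W, this]
  · intro h; exact absurd (Finset.mem_univ _) h

lemma kappa_zero_right {n : ℕ} (p : V2 n) : kappa p 0 = 1 := by simp [kappa]

lemma W_zero_mulVec {n : ℕ} (φ : V2 n → ℂ) : (W (0 : V2 n) 0).mulVec φ = φ := by
  funext y
  rw [W_mulVec, kappa_zero_right, dotZ2_zero_right]
  simp

lemma W_comp {n : ℕ} (p1 q1 p2 q2 : V2 n) (φ : V2 n → ℂ) :
    ∃ c : ℂ, c ≠ 0 ∧ (W p1 q1).mulVec ((W p2 q2).mulVec φ)
      = c • (W (p1 + p2) (q1 + q2)).mulVec φ := by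
  refine ⟨kappa p1 q1 * kappa p2 q2 * (kappa (p1+p2) (q1+q2))⁻¹ * (-1) ^ (dotZ2 q1 p2).val,
    ?_, ?_⟩
  · exact mul_ne_zero (mul_ne_zero (mul_ne_zero (kappa_ne_zero _ _) (kappa_ne_zero _ _))
      (inv_ne_zero (kappa_ne_zero _ _))) (pow_ne_zero _ (by norm_num))
  · funext y
    simp only [Pi.smul_apply, smul_eq_mul]
    rw [W_mulVec, W_mulVec, W_mulVec]
    have h1 : dotZ2 (y + q1) p2 = dotZ2 y p2 + dotZ2 q1 p2 := dotZ2_add_left _ _ _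
    have h2 : dotZ2 y (p1 + p2) = dotZ2 y p1 + dotZ2 y p2 := dotZ2_add_right _ _ _
    have h3 : y + q1 + q2 = y + (q1 + q2) := add_assoc _ _ _
    rw [h1, h2, h3, neg_one_pow_val_add, neg_one_pow_val_add]
    field_simp [kappa_ne_zero]

/-- The first-coordinate pairing with `v` as a linear map. -/
def dotFst {n : ℕ} (v : V2 n) : (V2 n × V2 n) →ₗ[ZMod 2] ZMod 2 where
  toFun x := dotZ2 x.1 v
  map_add' x y := by simp [dotZ2_add_left]
  map_smul' c x := by simp [dotZ2_smul_left]

lemma functional_eq_dot {n : ℕ} (g : V2 n →ₗ[ZMod 2] ZMod 2) (u : V2 n) :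
    g u = dotZ2 (fun i => g (Pi.single i 1)) u := by
  conv_lhs => rw [← Finset.univ_sum_single u]
  rw [map_sum, dotZ2]
  refine Finset.sum_congr rfl fun i _ => ?_
  have : Pi.single i (u i) = u i • (Pi.single i 1 : V2 n) := by
    funext j
    by_cases h : j = i <;> simp [Pi.single_apply, h]
  rw [this, map_smul]
  simp [mul_comm]

lemma extension_lemma {n : ℕ} (L : Submodule (ZMod 2) (V2 n × V2 n))
    (hLag : IsLagrangian L) (v : V2 n)
    (hv : ∀ x ∈ L, x.2 = 0 → dotZ2 v x.1 = 0) :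
    ∃ x ∈ L, x.2 = v := by
  classical
  set π : L →ₗ[ZMod 2] V2 n :=
    (LinearMap.snd (ZMod 2) (V2 n) (V2 n)).comp L.subtype with hπ
  set G : L →ₗ[ZMod 2] ZMod 2 := (dotFst v).comp L.subtype with hG
  have hker : LinearMap.ker π ≤ LinearMap.ker G := by
    intro x hx
    have h2 : (x : V2 n × V2 n).2 = 0 := hx
    have := hv (x : V2 n × V2 n) x.2 h2
    rw [dotZ2_comm] at this
    simpa [hG, dotFst] using this
  set h₁ : (L ⧸ LinearMap.ker π) →ₗ[ZMod 2] ZMod 2 := Submodule.liftQ _ G hker with hh₁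
  set e := LinearMap.quotKerEquivRange π with he
  set h₂ : LinearMap.range π →ₗ[ZMod 2] ZMod 2 := h₁.comp e.symm.toLinearMap with hh₂
  obtain ⟨g, hg⟩ := LinearMap.exists_extend h₂
  set w : V2 n := fun i => g (Pi.single i 1) with hw
  have key : ∀ x ∈ L, dotZ2 w x.2 = dotZ2 x.1 v := by
    intro x hx
    have hmem : x.2 ∈ LinearMap.range π := ⟨⟨x, hx⟩, rfl⟩
    have h4 : g x.2 = h₂ ⟨x.2, hmem⟩ := by
      have := congrFun (congrArg (fun f => f.toFun) hg) ⟨x.2, hmem⟩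
      simpa using this
    have h5 : e (Submodule.Quotient.mk ⟨x, hx⟩) = ⟨x.2, hmem⟩ := by
      apply Subtype.ext
      simp only [he, LinearMap.quotKerEquivRange_apply_mk]
      rfl
    have h6 : h₂ ⟨x.2, hmem⟩ = G ⟨x, hx⟩ := by
      rw [hh₂, LinearMap.comp_apply, ← h5]
      simp [hh₁]
    rw [← functional_eq_dot g x.2, h4, h6]
    rfl
  set u : V2 n × V2 n := (w, v) with hu
  have hsymp_u : ∀ x ∈ L, symp u x = 0 ∧ symp x u = 0 := by
    intro x hx
    have := key x hx
    constructor
    · show dotZ2 w x.2 - dotZ2 x.1 v = 0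
      rw [this, sub_self]
    · show dotZ2 x.1 v - dotZ2 w x.2 = 0
      rw [this, sub_self]
  have hiso : IsIsotropic (L ⊔ Submodule.span (ZMod 2) {u}) := by
    intro x hx y hy
    rw [Submodule.mem_sup] at hx hy
    obtain ⟨a, ha, b, hb, rfl⟩ := hx
    obtain ⟨a', ha', b', hb', rfl⟩ := hy
    rw [Submodule.mem_span_singleton] at hb hb'
    obtain ⟨c, rfl⟩ := hb
    obtain ⟨c', rfl⟩ := hb'
    have expand : ∀ s t : V2 n × V2 n, symp (a + s) (a' + t)
        = symp a a' + symp a t + symp s a' + symp s t := by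
      intro s t
      simp only [symp, Prod.fst_add, Prod.snd_add, dotZ2_add_left, dotZ2_add_right]
      ring
    rw [expand]
    have h1 : symp a a' = 0 := hLag.1 a ha a' ha'
    have h2 : symp a (c' • u) = 0 := by
      show dotZ2 a.1 (c' • u).2 - dotZ2 (c' • u).1 a.2 = 0
      have : (c' • u).2 = c' • u.2 := rfl
      have h2' : (c' • u).1 = c' • u.1 := rfl
      rw [this, h2', dotZ2_smul_right, dotZ2_smul_left]
      have := (hsymp_u a ha).2
      unfold symp at this
      rw [← mul_sub, this, mul_zero]
    have h3 : symp (c • u) a' = 0 := by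
      show dotZ2 (c • u.1) a'.2 - dotZ2 a'.1 (c • u.2) = 0
      rw [dotZ2_smul_left, dotZ2_smul_right]
      have hsub : dotZ2 u.1 a'.2 - dotZ2 a'.1 u.2 = 0 := (hsymp_u a' ha').1
      rw [← mul_sub, hsub, mul_zero]
    have h4 : symp (c • u) (c' • u) = 0 := by
      show dotZ2 (c • u.1) (c' • u.2) - dotZ2 (c' • u.1) (c • u.2) = 0
      rw [dotZ2_smul_left, dotZ2_smul_right, dotZ2_smul_left, dotZ2_smul_right]
      ring
    rw [h1, h2, h3, h4]; ring
  have heq := hLag.2 _ hiso le_sup_left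
  have humem : u ∈ L := by
    rw [← heq]
    exact Submodule.mem_sup_right (Submodule.mem_span_singleton_self u)
  exact ⟨u, humem, rfl⟩

/-- All nonzero amplitudes of a unit-norm stabiliser state with support size `2^r`
have the same absolute value `2^{-r/2}`. -/
theorem stab_amplitudes_flat {n : ℕ} (p q : Fin n → V2 n) (lam : Fin n → ZMod 2)
    (hLag : IsLagrangian (Submodule.span (ZMod 2) (Set.range fun j => (p j, q j))))
    (ψ : V2 n → ℂ) (hnorm : (∑ z, ‖ψ z‖ ^ 2) = 1)
    (heig : ∀ j, (W (p j) (q j)).mulVec ψ = ((-1 : ℂ) ^ (lam j).val) • ψ)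
    (r : ℕ) (hsupp : Nat.card {z : V2 n // ψ z ≠ 0} = 2 ^ r) :
    ∀ z : V2 n, ψ z ≠ 0 → ‖ψ z‖ = (2 : ℝ) ^ (-(r : ℝ) / 2) := by
  classical
  intro z hz
  set L := Submodule.span (ZMod 2) (Set.range fun j => (p j, q j)) with hL
  -- every element of L gives an eigen-relation
  have hW0 : (W ((0 : V2 n × V2 n)).1 ((0 : V2 n × V2 n)).2).mulVec ψ = (1:ℂ) • ψ := by
    rw [show ((0 : V2 n × V2 n)).1 = 0 from rfl, show ((0 : V2 n × V2 n)).2 = 0 from rfl,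
      W_zero_mulVec, one_smul]
  have heigL : ∀ x ∈ L, ∃ μ : ℂ, μ ≠ 0 ∧ (W x.1 x.2).mulVec ψ = μ • ψ := by
    intro x hx
    refine Submodule.span_induction ?_ ?_ ?_ ?_ hx
    · rintro _ ⟨j, rfl⟩
      exact ⟨(-1 : ℂ) ^ (lam j).val, pow_ne_zero _ (by norm_num), heig j⟩
    · exact ⟨1, one_ne_zero, hW0⟩
    · rintro x y hxm hym ⟨μ, hμ0, hμ⟩ ⟨ν, hν0, hν⟩
      obtain ⟨c, hc0, hc⟩ := W_comp x.1 x.2 y.1 y.2 ψ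
      refine ⟨c⁻¹ * (μ * ν), mul_ne_zero (inv_ne_zero hc0) (mul_ne_zero hμ0 hν0), ?_⟩
      have hcomp : (W x.1 x.2).mulVec ((W y.1 y.2).mulVec ψ) = (μ * ν) • ψ := by
        rw [hν, Matrix.mulVec_smul, hμ, smul_smul, mul_comm]
      rw [hcomp] at hc
      have : (W (x.1 + y.1) (x.2 + y.2)).mulVec ψ = c⁻¹ • ((μ * ν) • ψ) := by
        rw [hc, ← smul_assoc, smul_eq_mul, inv_mul_cancel₀ hc0, one_smul]
      show (W (x + y).1 (x + y).2).mulVec ψ = (c⁻¹ * (μ * ν)) • ψ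
      rw [show (x + y).1 = x.1 + y.1 from rfl, show (x + y).2 = x.2 + y.2 from rfl,
        this, smul_smul]
    · rintro a x hxm ⟨μ, hμ0, hμ⟩
      rcases (by decide : ∀ b : ZMod 2, b = 0 ∨ b = 1) a with rfl | rfl
      · rw [zero_smul]
        exact ⟨1, one_ne_zero, hW0⟩
      · rw [one_smul]
        exact ⟨μ, hμ0, hμ⟩
  -- moduli are invariant under translating by second components of L
  have habs : ∀ x ∈ L, ∀ y, ‖ψ (y + x.2)‖ = ‖ψ y‖ := by
    intro x hx
    obtain ⟨μ, hμ0, hμ⟩ := heigL x hx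
    have key : ∀ y, ‖ψ (y + x.2)‖ = ‖μ‖ * ‖ψ y‖ := by
      intro y
      have h1 := congrFun hμ y
      rw [W_mulVec] at h1
      have h2 := congrArg norm h1
      simpa [norm_mul, abs_kappa, norm_pow] using h2
    have hμ1 : ‖μ‖ = 1 := by
      have hsum : (1:ℝ) = ‖μ‖ ^ 2 := by
        calc (1:ℝ) = ∑ y, ‖ψ y‖ ^ 2 := hnorm.symm
          _ = ∑ y, ‖ψ (y + x.2)‖ ^ 2 :=
              (Fintype.sum_equiv (Equiv.addRight x.2)
                (fun y => ‖ψ (y + x.2)‖ ^ 2)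
                (fun y => ‖ψ y‖ ^ 2) (fun y => rfl)).symm
          _ = ∑ y, ‖μ‖ ^ 2 * ‖ψ y‖ ^ 2 := by
              simp [key, mul_pow]
          _ = ‖μ‖ ^ 2 * ∑ y, ‖ψ y‖ ^ 2 := by
              rw [Finset.mul_sum]
          _ = ‖μ‖ ^ 2 := by rw [hnorm, mul_one]
      calc ‖μ‖ = Real.sqrt (‖μ‖ ^ 2) :=
            (Real.sqrt_sq (norm_nonneg _)).symm
        _ = Real.sqrt 1 := by rw [← hsum]
        _ = 1 := Real.sqrt_one
    intro y; rw [key y, hμ1, one_mul]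
  -- elements of L with vanishing second component constrain the support
  have hdot : ∀ x ∈ L, x.2 = 0 → ∀ z₁, ψ z₁ ≠ 0 → ∀ z₂, ψ z₂ ≠ 0 →
      dotZ2 (z₁ + z₂) x.1 = 0 := by
    intro x hx h0 z₁ h1 z₂ h2
    obtain ⟨μ, hμ0, hμ⟩ := heigL x hx
    have hval : ∀ z', ψ z' ≠ 0 → ((-1:ℂ)) ^ (dotZ2 z' x.1).val = μ := by
      intro z' hz'
      have h1' := congrFun hμ z'
      rw [W_mulVec, h0, kappa_zero_right, one_mul, add_zero] at h1'
      exact mul_right_cancel₀ hz' (by simpa using h1')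
    have heq : dotZ2 z₁ x.1 = dotZ2 z₂ x.1 :=
      neg_one_pow_val_inj _ _ (by rw [hval z₁ h1, hval z₂ h2])
    rw [dotZ2_add_left, heq, zmod2_add_self]
  -- all nonzero amplitudes have the same modulus
  have hconst : ∀ z', ψ z' ≠ 0 → ‖ψ z'‖ = ‖ψ z‖ := by
    intro z' hz'
    obtain ⟨x, hxL, hx2⟩ := extension_lemma L hLag (z + z')
      (fun x hx h0 => hdot x hx h0 z hz z' hz')
    have h := habs x hxL z'
    rw [hx2] at h
    have hzz : z' + (z + z') = z := by
      rw [add_comm z z', ← add_assoc, v2_add_self, zero_add]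
    rw [hzz] at h
    exact h.symm
  -- counting
  set S : Finset (V2 n) := Finset.univ.filter (fun y => ψ y ≠ 0) with hS
  have hcard : S.card = 2 ^ r := by
    rw [← hsupp, Nat.card_eq_fintype_card, Fintype.card_subtype]
  have hsum1 : (1:ℝ) = (S.card : ℝ) * ‖ψ z‖ ^ 2 := by
    calc (1:ℝ) = ∑ y, ‖ψ y‖ ^ 2 := hnorm.symm
      _ = ∑ y ∈ S, ‖ψ y‖ ^ 2 := by
          rw [eq_comm]
          apply Finset.sum_subset (Finset.subset_univ S)
          intro y _ hy
          simp only [hS, Finset.mem_filter, Finset.mem_univ, true_and, not_not] at hy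
          rw [hy]; simp
      _ = ∑ y ∈ S, ‖ψ z‖ ^ 2 := Finset.sum_congr rfl (fun y hy => by
          have hy' : ψ y ≠ 0 := by
            simpa only [hS, Finset.mem_filter, Finset.mem_univ, true_and] using hy
          rw [hconst y hy'])
      _ = (S.card : ℝ) * ‖ψ z‖ ^ 2 := by rw [Finset.sum_const, nsmul_eq_mul]
  have habs2 : ‖ψ z‖ ^ 2 = ((2:ℝ) ^ r)⁻¹ := by
    have hc : ((S.card : ℝ)) = (2:ℝ) ^ r := by rw [hcard]; push_cast; ring
    rw [hc] at hsum1
    have h2 : ((2:ℝ) ^ r) ≠ 0 := by positivity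
    field_simp
    linarith [hsum1]
  have hnn : (0:ℝ) ≤ (2:ℝ) ^ (-(r:ℝ)/2) := Real.rpow_nonneg (by norm_num) _
  have hsq : ((2:ℝ) ^ (-(r:ℝ)/2)) ^ 2 = ((2:ℝ) ^ r)⁻¹ := by
    rw [← Real.rpow_natCast ((2:ℝ) ^ (-(r:ℝ)/2)) 2, ← Real.rpow_mul (by norm_num)]
    rw [show (-(r:ℝ)/2) * ((2:ℕ):ℝ) = -(r:ℝ) by push_cast; ring]
    rw [Real.rpow_neg (by norm_num), Real.rpow_natCast]
  calc ‖ψ z‖ = Real.sqrt (‖ψ z‖ ^ 2) :=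
        (Real.sqrt_sq (norm_nonneg _)).symm
    _ = Real.sqrt (((2:ℝ) ^ (-(r:ℝ)/2)) ^ 2) := by rw [habs2, hsq]
    _ = (2:ℝ) ^ (-(r:ℝ)/2) := Real.sqrt_sq hnn
end
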